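/- arXiv:2006.16180 — 4 statements merged into one kernel-verified Lean document; each statement's English description precedes it below -/
import Mathlib

section
/- Let η = Σ_{k=1}^d (ξ_k - p) x_k with ξ_k i.i.d. Bernoulli(p), 0 < p ≤ 1/2. Then Var(η²) = p(1-p)(1-6p+6p²)‖x‖₄⁴ + 2p²(1-p)²‖x‖⁴. -/
open MeasureTheory ProbabilityTheory Finset

/-!
Write `η = ∑ k, Y k` with `Y k = (ξ k - p) * x k`, independent and centred. Expanding
`(S + Y)⁴` binomially for a partial sum `S` independent of `Y`, the odd cross terms vanish, so by
induction `E[η²] = ∑ E[Y k ²]` and `E[η⁴] = ∑ E[Y k ⁴] + 3 ((∑ E[Y k ²])² - ∑ (E[Y k ²])²)`.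
Inserting the Bernoulli moments `E[(ξ - p)ⁿ] = p (1 - p)ⁿ + (1 - p) (-p)ⁿ` gives the formula.
-/

section Moments

variable {Ω : Type*} [MeasurableSpace Ω] {μ : Measure Ω}

lemma MeasureTheory.MemLp.integrable_pow_of_le [IsFiniteMeasure μ] {f : Ω → ℝ} {n m : ℕ}
    (hf : MemLp f n μ) (hm : m ≤ n) : Integrable (fun ω => f ω ^ m) μ :=
  (integrable_norm_pow_of_le hf.1 hm hf.integrable_norm_pow').mono' (hf.1.pow m)
    (ae_of_all _ fun ω => by simp [norm_pow])

lemma ProbabilityTheory.IndepFun.integral_add_pow [IsFiniteMeasure μ] {X Z : Ω → ℝ} {n : ℕ}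
    (hXZ : IndepFun X Z μ) (hX : MemLp X n μ) (hZ : MemLp Z n μ) :
    ∫ ω, (X ω + Z ω) ^ n ∂μ
      = ∑ m ∈ range (n + 1), (∫ ω, X ω ^ m ∂μ) * (∫ ω, Z ω ^ (n - m) ∂μ) * n.choose m := by
  have hpow : ∀ m ∈ range (n + 1),
      IndepFun (fun ω => X ω ^ m) (fun ω => Z ω ^ (n - m)) μ := fun m _ =>
    hXZ.comp (measurable_id.pow_const m) (measurable_id.pow_const (n - m))
  have hint : ∀ m ∈ range (n + 1),
      Integrable (fun ω => X ω ^ m * Z ω ^ (n - m) * n.choose m) μ := fun m hm =>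
    ((hpow m hm).integrable_mul (hX.integrable_pow_of_le (by grind))
      (hZ.integrable_pow_of_le (Nat.sub_le n m))).mul_const _
  simp_rw [add_pow]
  rw [integral_finsetSum _ hint]
  refine sum_congr rfl fun m hm => ?_
  rw [integral_mul_const, (hpow m hm).integral_fun_mul_eq_mul_integral (hX.1.pow m) (hZ.1.pow _)]

lemma integral_finsetSum_eq_zero {ι : Type*} {X : ι → Ω → ℝ} (hX : ∀ i, Integrable (X i) μ)
    (hX₀ : ∀ i, μ[X i] = 0) (s : Finset ι) : μ[∑ i ∈ s, X i] = 0 := by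
  simp_rw [Finset.sum_apply]
  rw [integral_finsetSum s fun i _ => hX i]
  exact sum_eq_zero fun i _ => hX₀ i

variable [IsProbabilityMeasure μ]

lemma ProbabilityTheory.IndepFun.integral_add_sq {X Z : Ω → ℝ} (hXZ : IndepFun X Z μ)
    (hX : MemLp X 2 μ) (hZ : MemLp Z 2 μ) (hX₀ : μ[X] = 0) (hZ₀ : μ[Z] = 0) :
    ∫ ω, (X ω + Z ω) ^ 2 ∂μ = ∫ ω, X ω ^ 2 ∂μ + ∫ ω, Z ω ^ 2 ∂μ := by
  rw [hXZ.integral_add_pow (n := 2) (by exact_mod_cast hX) (by exact_mod_cast hZ)]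
  simp [sum_range_succ, hX₀, hZ₀]
  ring

lemma ProbabilityTheory.IndepFun.integral_add_pow_four {X Z : Ω → ℝ} (hXZ : IndepFun X Z μ)
    (hX : MemLp X 4 μ) (hZ : MemLp Z 4 μ) (hX₀ : μ[X] = 0) (hZ₀ : μ[Z] = 0) :
    ∫ ω, (X ω + Z ω) ^ 4 ∂μ
      = ∫ ω, X ω ^ 4 ∂μ + 6 * (∫ ω, X ω ^ 2 ∂μ) * (∫ ω, Z ω ^ 2 ∂μ) + ∫ ω, Z ω ^ 4 ∂μ := by
  rw [hXZ.integral_add_pow (n := 4) (by exact_mod_cast hX) (by exact_mod_cast hZ)]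
  simp [sum_range_succ, hX₀, hZ₀, Nat.choose]
  ring

variable {ι : Type*} {X : ι → Ω → ℝ}

lemma ProbabilityTheory.iIndepFun.integral_sum_sq (hind : iIndepFun X μ)
    (hX : ∀ i, MemLp (X i) 2 μ) (hX₀ : ∀ i, μ[X i] = 0) (s : Finset ι) :
    ∫ ω, (∑ i ∈ s, X i ω) ^ 2 ∂μ = ∑ i ∈ s, ∫ ω, X i ω ^ 2 ∂μ := by
  classical
  induction s using Finset.induction_on with
  | empty => simp
  | @insert a s ha ih =>
    have hindep : IndepFun (∑ i ∈ s, X i) (X a) μ :=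
      hind.indepFun_finsetSum_of_notMem₀ (fun i => (hX i).aemeasurable) ha
    have hS₀ := integral_finsetSum_eq_zero (fun i => (hX i).integrable one_le_two) hX₀ s
    simp_rw [sum_insert ha, add_comm (X a _)]
    rw [← ih, add_comm]
    simpa using hindep.integral_add_sq (memLp_finsetSum' s fun i _ => hX i) (hX a) hS₀ (hX₀ a)

lemma ProbabilityTheory.iIndepFun.integral_sum_pow_four (hind : iIndepFun X μ)
    (hX : ∀ i, MemLp (X i) 4 μ) (hX₀ : ∀ i, μ[X i] = 0) (s : Finset ι) :
    ∫ ω, (∑ i ∈ s, X i ω) ^ 4 ∂μ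
      = ∑ i ∈ s, ∫ ω, X i ω ^ 4 ∂μ
        + 3 * ((∑ i ∈ s, ∫ ω, X i ω ^ 2 ∂μ) ^ 2 - ∑ i ∈ s, (∫ ω, X i ω ^ 2 ∂μ) ^ 2) := by
  classical
  have hX₂ : ∀ i, MemLp (X i) 2 μ := fun i => (hX i).mono_exponent (by norm_num)
  induction s using Finset.induction_on with
  | empty => simp
  | @insert a s ha ih =>
    have hindep : IndepFun (∑ i ∈ s, X i) (X a) μ :=
      hind.indepFun_finsetSum_of_notMem₀ (fun i => (hX i).aemeasurable) ha
    have hS₀ := integral_finsetSum_eq_zero (fun i => (hX i).integrable (by norm_num)) hX₀ s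
    have hstep := hindep.integral_add_pow_four (memLp_finsetSum' s fun i _ => hX i) (hX a)
      hS₀ (hX₀ a)
    simp only [Finset.sum_apply] at hstep
    simp_rw [sum_insert ha, add_comm (X a _), hstep, ih, hind.integral_sum_sq hX₂ hX₀ s]
    ring

lemma ProbabilityTheory.iIndepFun.variance_sum_sq [Fintype ι] (hind : iIndepFun X μ)
    (hX : ∀ i, MemLp (X i) 4 μ) (hX₀ : ∀ i, μ[X i] = 0) :
    Var[fun ω => (∑ i, X i ω) ^ 2; μ]
      = ∑ i, (∫ ω, X i ω ^ 4 ∂μ - 3 * (∫ ω, X i ω ^ 2 ∂μ) ^ 2)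
        + 2 * (∑ i, ∫ ω, X i ω ^ 2 ∂μ) ^ 2 := by
  have hS : MemLp (fun ω => ∑ i, X i ω) (4 : ℕ) μ := by
    simpa using memLp_finsetSum univ fun i _ => hX i
  have hS₂ : MemLp (fun ω => (∑ i, X i ω) ^ 2) 2 μ := by
    refine (memLp_two_iff_integrable_sq (hS.1.pow 2)).2 ?_
    simpa [← pow_mul] using hS.integrable_pow_of_le le_rfl
  rw [variance_eq_sub hS₂]
  simp only [Pi.pow_apply, ← pow_mul]
  rw [hind.integral_sum_pow_four hX hX₀,
    hind.integral_sum_sq (fun i => (hX i).mono_exponent (by norm_num)) hX₀, sum_sub_distrib,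
    ← mul_sum]
  ring

lemma integral_comp_bernoulli {ξ : Ω → ℝ} (hξ : Measurable ξ) (hval : ∀ ω, ξ ω = 0 ∨ ξ ω = 1)
    {p : ℝ} (hp : 0 ≤ p) (hdist : μ {ω | ξ ω = 1} = ENNReal.ofReal p) (f : ℝ → ℝ) :
    ∫ ω, f (ξ ω) ∂μ = p * f 1 + (1 - p) * f 0 := by
  set A := {ω | ξ ω = 1}
  have hA : MeasurableSet A := hξ (measurableSet_singleton 1)
  have hf : (fun ω => f (ξ ω)) = fun ω => f 0 + (f 1 - f 0) * A.indicator 1 ω := by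
    funext ω
    rcases hval ω with h | h <;> simp [A, h]
  rw [hf, integral_add (integrable_const _) (((integrable_const 1).indicator hA).const_mul _),
    integral_const, integral_const_mul, integral_indicator_one hA]
  simp [measureReal_def, hdist, hp]
  ring

end Moments

theorem bernoulli_variance_of_eta_sq_general
    {Ω : Type*} [MeasurableSpace Ω] (μ : Measure Ω) [IsProbabilityMeasure μ]
    {d : ℕ} (p : ℝ) (hp : 0 < p)
    (ξ : Fin d → Ω → ℝ) (hmeas : ∀ k, Measurable (ξ k))
    (hval : ∀ k ω, ξ k ω = 0 ∨ ξ k ω = 1)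
    (hdist : ∀ k, μ {ω | ξ k ω = 1} = ENNReal.ofReal p)
    (hind : iIndepFun ξ μ)
    (x : Fin d → ℝ) :
    variance (fun ω => (∑ k, (ξ k ω - p) * x k) ^ 2) μ
      = p * (1 - p) * (1 - 6 * p + 6 * p ^ 2) * (∑ k, (x k) ^ 4)
        + 2 * p ^ 2 * (1 - p) ^ 2 * (∑ k, (x k) ^ 2) ^ 2 := by
  set Y : Fin d → Ω → ℝ := fun k ω => (ξ k ω - p) * x k
  have hY : iIndepFun Y μ := hind.comp _ fun k => (measurable_id.sub_const p).mul_const (x k)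
  have hmom : ∀ k n, ∫ ω, Y k ω ^ n ∂μ = (p * (1 - p) ^ n + (1 - p) * (-p) ^ n) * x k ^ n :=
    fun k n => (integral_comp_bernoulli (hmeas k) (hval k) hp.le (hdist k)
      fun t => ((t - p) * x k) ^ n).trans (by rw [mul_pow, mul_pow, zero_sub]; ring)
  have hmemLp : ∀ k, MemLp (Y k) 4 μ := fun k =>
    have hξ : MemLp (ξ k) 4 μ := MemLp.of_bound (hmeas k).aestronglyMeasurable 1
      (ae_of_all _ fun ω => by rcases hval k ω with h | h <;> simp [h])
    (hξ.sub (memLp_const p)).mul_const (x k)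
  have hmean : ∀ k, μ[Y k] = 0 := fun k => by simpa [mul_comm p] using hmom k 1
  rw [hY.variance_sum_sq hmemLp hmean]
  simp only [hmom]
  calc _ = (p * (1 - p) * (1 - 6 * p + 6 * p ^ 2)) * (∑ k, (x k) ^ 4)
        + 2 * (p * (1 - p) * ∑ k, (x k) ^ 2) ^ 2 := by
          rw [mul_sum, mul_sum]
          congr 1
          · exact sum_congr rfl fun k _ => by ring
          · congr 2
            exact sum_congr rfl fun k _ => by ring
    _ = _ := by ring

/-- Variance of `η²` where `η = ∑ k, (ξ k - p) x k` for i.i.d. Bernoulli(p) `ξ`. -/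
theorem bernoulli_variance_of_eta_sq
    {Ω : Type*} [MeasurableSpace Ω] (μ : Measure Ω) [IsProbabilityMeasure μ]
    {d : ℕ} (p : ℝ) (hp : 0 < p) (hp' : p ≤ 1 / 2)
    (ξ : Fin d → Ω → ℝ) (hmeas : ∀ k, Measurable (ξ k))
    (hval : ∀ k ω, ξ k ω = 0 ∨ ξ k ω = 1)
    (hdist : ∀ k, μ {ω | ξ k ω = 1} = ENNReal.ofReal p)
    (hind : iIndepFun ξ μ)
    (x : Fin d → ℝ) :
    variance (fun ω => (∑ k, (ξ k ω - p) * x k) ^ 2) μ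
      = p * (1 - p) * (1 - 6 * p + 6 * p ^ 2) * (∑ k, (x k) ^ 4)
        + 2 * p ^ 2 * (1 - p) ^ 2 * (∑ k, (x k) ^ 2) ^ 2 :=
  bernoulli_variance_of_eta_sq_general μ p hp ξ hmeas hval hdist hind x
end

section
/- For all real a with 0 < a ≤ 4, the inequality a²/4 < (1+a)log(1+a) - a holds. -/
/-!
Dividing by `1 + a`, the claim becomes `a (4 + a) / (4 (1 + a)) < log (1 + a)`. The difference
`logDefect` of the two sides vanishes at `0` and has derivative `a (2 - a) / (4 (1 + a)²)`, so it
increases on `[0, 2]` and decreases on `[2, ∞)`. At the right end `logDefect 4 = log 5 - 8/5`,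
which is positive because `e⁸ < 5⁵`.
-/

open Real Set

noncomputable def logDefect (x : ℝ) : ℝ := log (1 + x) - x * (4 + x) / (4 * (1 + x))

theorem hasDerivAt_logDefect {x : ℝ} (hx : -1 < x) :
    HasDerivAt logDefect (x * (2 - x) / (4 * (1 + x) ^ 2)) x := by
  have hx0 : 1 + x ≠ 0 := by linarith
  have hlog : HasDerivAt (fun y => log (1 + y)) (1 / (1 + x)) x := by
    simpa using ((hasDerivAt_id' x).const_add 1).log hx0
  have hnum := (hasDerivAt_id' x).mul ((hasDerivAt_id' x).const_add 4)
  have hden := ((hasDerivAt_id' x).const_add 1).const_mul 4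
  refine (hlog.sub (hnum.div hden (mul_ne_zero four_ne_zero hx0))).congr_deriv ?_
  simp only [Pi.mul_apply]
  field_simp
  ring

@[simp]
theorem logDefect_zero : logDefect 0 = 0 := by simp [logDefect]

theorem continuousOn_logDefect : ContinuousOn logDefect (Ioi (-1)) := fun _ hx =>
  (hasDerivAt_logDefect hx).continuousAt.continuousWithinAt

theorem strictMonoOn_logDefect : StrictMonoOn logDefect (Icc 0 2) := by
  refine strictMonoOn_of_deriv_pos (convex_Icc 0 2)
    (continuousOn_logDefect.mono fun x hx => by simp only [mem_Ioi]; linarith [hx.1]) ?_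
  intro x hx
  rw [interior_Icc] at hx
  rw [(hasDerivAt_logDefect (by linarith [hx.1])).deriv]
  exact div_pos (mul_pos hx.1 (by linarith [hx.2])) (by nlinarith [hx.1])

theorem strictAntiOn_logDefect : StrictAntiOn logDefect (Ici 2) := by
  refine strictAntiOn_of_deriv_neg (convex_Ici 2)
    (continuousOn_logDefect.mono fun x hx => by simp only [mem_Ioi]; linarith [mem_Ici.mp hx]) ?_
  intro x hx
  rw [interior_Ici, mem_Ioi] at hx
  rw [(hasDerivAt_logDefect (by linarith)).deriv]
  exact div_neg_of_neg_of_pos (mul_neg_of_pos_of_neg (by linarith) (by linarith)) (by nlinarith)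

theorem exp_eight_fifths_lt_five : exp (8 / 5) < 5 := by
  have hpow : exp (8 / 5) ^ 5 = exp 1 ^ 8 := by
    rw [← exp_nat_mul, ← exp_nat_mul]; norm_num
  have he : exp 1 ^ 8 < 5 ^ 5 :=
    (pow_lt_pow_left₀ exp_one_lt_d9 (exp_pos 1).le (by norm_num)).trans (by norm_num)
  exact lt_of_pow_lt_pow_left₀ 5 (by norm_num) (hpow ▸ he)

theorem logDefect_four_pos : 0 < logDefect 4 := by
  have : 8 / 5 < log 5 := (lt_log_iff_exp_lt (by norm_num)).mpr exp_eight_fifths_lt_five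
  norm_num [logDefect]
  linarith

theorem logDefect_pos {a : ℝ} (ha : 0 < a) (ha' : a ≤ 4) : 0 < logDefect a := by
  rcases le_total a 2 with h | h
  · simpa using strictMonoOn_logDefect ⟨le_rfl, by norm_num⟩ ⟨ha.le, h⟩ ha
  · exact logDefect_four_pos.trans_le <|
      strictAntiOn_logDefect.antitoneOn (mem_Ici.mpr h) (by norm_num [mem_Ici]) ha'

/-- For `0 < a ≤ 4`, `a²/4 < (1+a)log(1+a) - a`. -/
theorem sq_div_four_lt_h (a : ℝ) (ha : 0 < a) (ha' : a ≤ 4) :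
    a ^ 2 / 4 < (1 + a) * Real.log (1 + a) - a := by
  have h1a : 0 < 1 + a := by linarith
  have hfactor : (1 + a) * Real.log (1 + a) - a - a ^ 2 / 4 = (1 + a) * logDefect a := by
    rw [logDefect]; field_simp; ring
  linarith [mul_pos h1a (logDefect_pos ha ha')]
end

section
/- Let 1 ≤ c ≤ d/2, q = (1/d)(1 + √((d-c)/(c(d-1)))), x ∈ ℝ^d with s_x = Σ_j x_j, and y ∈ ℝ^d defined by y_i = x_i - q s_x. Then ‖y‖² = ‖x‖² - ((c-1)/(c(d-1))) s_x², and in particular ‖y‖² ≤ ‖x‖². -/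
open Finset

/-! Subtracting `a = q s_x` from every coordinate gives `‖y‖² = ‖x‖² - q (2 - d q) s_x²`.
Writing `q = (1 + r) / d`, the coefficient is `q (2 - d q) = (1 - r²) / d`, and
`r² = (d - c) / (c (d - 1))` turns it into `(c - 1) / (c (d - 1)) ≥ 0`. -/

theorem sum_sub_mul_sum_sq {ι : Type*} [Fintype ι] (x : ι → ℝ) (q : ℝ) :
    ∑ i, (x i - q * ∑ j, x j) ^ 2
      = ∑ i, x i ^ 2 - q * (2 - Fintype.card ι * q) * (∑ j, x j) ^ 2 := by
  simp only [sub_sq, sum_add_distrib, sum_sub_distrib, ← sum_mul, ← mul_sum, sum_const,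
    card_univ, nsmul_eq_mul]
  ring

theorem one_add_sqrt_div_mul_two_sub {d t : ℝ} (hd : d ≠ 0) (ht : 0 ≤ t) :
    (1 / d) * (1 + √t) * (2 - d * ((1 / d) * (1 + √t))) = (1 - t) / d := by
  have hsq : √t ^ 2 = t := Real.sq_sqrt ht
  field_simp
  linear_combination -hsq

theorem debiased_norm_identity_general
    {d c : ℕ} (hc : 1 ≤ c) (hcd : 2 * c ≤ d)
    (x : Fin d → ℝ) :
    let sx : ℝ := ∑ j, x j
    let q : ℝ := (1 / d) * (1 + Real.sqrt ((d - c) / (c * (d - 1))))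
    let y : Fin d → ℝ := fun i => x i - q * sx
    (∑ i, (y i) ^ 2 = ∑ i, (x i) ^ 2 - ((c - 1 : ℝ) / (c * (d - 1))) * sx ^ 2) ∧
    ∑ i, (y i) ^ 2 ≤ ∑ i, (x i) ^ 2 := by
  intro sx q y
  have hc' : (1 : ℝ) ≤ c := by exact_mod_cast hc
  have hcd' : (2 * c : ℝ) ≤ d := by exact_mod_cast hcd
  have hcoeff : q * (2 - d * q) = (c - 1 : ℝ) / (c * (d - 1)) := by
    have hd0 : (d : ℝ) ≠ 0 := by linarith
    have hd1 : (d : ℝ) - 1 ≠ 0 := by linarith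
    rw [one_add_sqrt_div_mul_two_sub hd0 (div_nonneg (by linarith) (by nlinarith))]
    field_simp
    ring
  have hid : ∑ i, y i ^ 2 = ∑ i, x i ^ 2 - ((c - 1 : ℝ) / (c * (d - 1))) * sx ^ 2 := by
    simpa only [Fintype.card_fin, hcoeff] using sum_sub_mul_sum_sq x q
  refine ⟨hid, ?_⟩
  have hnonneg : (0 : ℝ) ≤ (c - 1) / (c * (d - 1)) :=
    div_nonneg (by linarith) (by nlinarith)
  rw [hid]
  nlinarith [sq_nonneg sx]

/-- With `q = (1/d)(1 + √((d-c)/(c(d-1))))` and `y i = x i - q s_x`,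
`‖y‖² = ‖x‖² - ((c-1)/(c(d-1))) s_x²`, hence `‖y‖² ≤ ‖x‖²`. -/
theorem debiased_norm_identity
    {d c : ℕ} (hc : 1 ≤ c) (hcd : 2 * c ≤ d) (hd : 2 ≤ d)
    (x : Fin d → ℝ) :
    let sx : ℝ := ∑ j, x j
    let q : ℝ := (1 / d) * (1 + Real.sqrt ((d - c) / (c * (d - 1))))
    let y : Fin d → ℝ := fun i => x i - q * sx
    (∑ i, (y i) ^ 2 = ∑ i, (x i) ^ 2 - ((c - 1 : ℝ) / (c * (d - 1))) * sx ^ 2) ∧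
    ∑ i, (y i) ^ 2 ≤ ∑ i, (x i) ^ 2 :=
  debiased_norm_identity_general hc hcd x
end

section
/- Let J be a uniformly random c-element subset of {1,...,d} with 5 ≤ c ≤ d/2, x ∈ ℝ^d, q = (1/d)(1 + √((d-c)/(c(d-1)))), y_i = x_i - q s_x, and η = Σ_{j∈J} y_j. Then E[η⁴] ≤ (5c/d) ‖x‖⁴. -/
open Finset

/-!
A 4-tuple of indices with `k` distinct entries lies in the random set `J` with probability
`p k = C(d-k, c-k) / C(d, c)`, so `E[η⁴]` is an explicit combination of the power sums
`Sₖ = ∑ yⱼᵏ` whose coefficients are built from `p 1, …, p 4`; moreover `p 1 = c/d` and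
`p (k+1) ≤ (c/d) p k`. The shift `q` is chosen so that `s_y² = w s_x²` with
`w = (d-c)/(c(d-1))`, while `‖x‖² - ‖y‖² = (1-w) s_x² / d`; hence `s_y²` is small compared to the
drop `‖x‖² - ‖y‖²`. Bounding the five terms of `E[η⁴]` by Cauchy–Schwarz and AM–GM leaves a
polynomial in `t = c/d` that is at most `5t` for `t ≤ 1/2`.
-/

/-- The probability that `k` fixed elements all lie in a uniformly random `c`-subset of an
`n`-set (for `k ≤ c ≤ n`). -/
noncomputable def sampleProb (n c k : ℕ) : ℝ := ((n - k).choose (c - k) : ℝ) / n.choose c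

section SampleProb

variable {n c : ℕ}

theorem sampleProb_nonneg (k : ℕ) : 0 ≤ sampleProb n c k := by
  unfold sampleProb; positivity

theorem sampleProb_zero (hcn : c ≤ n) : sampleProb n c 0 = 1 := by
  have : (n.choose c : ℝ) ≠ 0 := by exact_mod_cast (Nat.choose_pos hcn).ne'
  simp [sampleProb, this]

theorem sampleProb_succ {k : ℕ} (hk : k < c) (hcn : c ≤ n) :
    sampleProb n c (k + 1) = sampleProb n c k * ((c - k) / (n - k)) := by
  have h := Nat.add_one_mul_choose_eq (n - (k + 1)) (c - (k + 1))
  rw [show n - (k + 1) + 1 = n - k by omega, show c - (k + 1) + 1 = c - k by omega] at h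
  have hR := congrArg (Nat.cast : ℕ → ℝ) h
  push_cast [Nat.cast_sub (by omega : k ≤ n), Nat.cast_sub hk.le] at hR
  have hC : (n.choose c : ℝ) ≠ 0 := by exact_mod_cast (Nat.choose_pos hcn).ne'
  have hnk : (n : ℝ) - k ≠ 0 := by
    have : (k : ℝ) < n := by exact_mod_cast hk.trans_le hcn
    linarith
  unfold sampleProb
  field_simp
  linear_combination hR

theorem sampleProb_one (hc : 0 < c) (hcn : c ≤ n) : sampleProb n c 1 = c / n := by
  simpa [sampleProb_zero hcn] using sampleProb_succ hc hcn

theorem sampleProb_succ_le {k : ℕ} (hk : k < c) (hcn : c ≤ n) :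
    sampleProb n c (k + 1) ≤ c / n * sampleProb n c k := by
  have hkc : (k : ℝ) < c := by exact_mod_cast hk
  have hcnR : (c : ℝ) ≤ n := by exact_mod_cast hcn
  have hk0 : (0 : ℝ) ≤ k := k.cast_nonneg
  have hratio : ((c : ℝ) - k) / (n - k) ≤ c / n := by
    rw [div_le_div_iff₀ (by linarith) (by linarith)]
    nlinarith
  rw [sampleProb_succ hk hcn, mul_comm (c / n : ℝ)]
  exact mul_le_mul_of_nonneg_left hratio (sampleProb_nonneg k)

theorem sampleProb_two_ge (hc : 5 ≤ c) (hcn : c ≤ n) :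
    4 / 5 * ((c : ℝ) / n) ^ 2 ≤ sampleProb n c 2 := by
  have hcR : (5 : ℝ) ≤ c := by exact_mod_cast hc
  have hcnR : (c : ℝ) ≤ n := by exact_mod_cast hcn
  rw [sampleProb_succ (by omega) hcn, sampleProb_one (by omega) hcn]
  have hratio : 4 * (c : ℝ) / (5 * n) ≤ (c - 1) / (n - 1) := by
    rw [div_le_div_iff₀ (by linarith) (by linarith)]
    nlinarith
  calc 4 / 5 * ((c : ℝ) / n) ^ 2 = c / n * (4 * c / (5 * n)) := by ring
    _ ≤ c / n * ((c - 1) / (n - 1)) := by gcongr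
    _ = _ := by norm_num

end SampleProb

section TupleSum

variable {α : Type*} [Fintype α] [DecidableEq α] (y : α → ℝ) (N : ℕ → ℝ)

/-- `tupleSum y N k T = ∑ j₁ … jₖ, y j₁ * ⋯ * y jₖ * N #(T ∪ {j₁, …, jₖ})`. -/
def tupleSum : ℕ → Finset α → ℝ
  | 0, T => N #T
  | k + 1, T => ∑ j, y j * tupleSum k (insert j T)

theorem sum_superset_pow_eq_tupleSum (c : ℕ) :
    ∀ (k : ℕ) (T : Finset α), #T + k ≤ c →
      ∑ J ∈ (powersetCard c univ).filter (T ⊆ ·), (∑ j ∈ J, y j) ^ k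
        = tupleSum y (fun i => ((Fintype.card α - i).choose (c - i) : ℝ)) k T
  | 0, T, hT => by
    simp [tupleSum, card_filter_powersetCard_subset T univ c (subset_univ T) (by omega)]
  | k + 1, T, hT => by
    calc ∑ J ∈ (powersetCard c univ).filter (T ⊆ ·), (∑ j ∈ J, y j) ^ (k + 1)
        = ∑ J ∈ (powersetCard c univ).filter (T ⊆ ·),
            ∑ j, if j ∈ J then y j * (∑ i ∈ J, y i) ^ k else 0 := by
          refine sum_congr rfl fun J _ => ?_
          rw [sum_ite_mem, univ_inter, pow_succ', sum_mul]
      _ = ∑ j, y j * ∑ J ∈ (powersetCard c univ).filter (insert j T ⊆ ·), (∑ i ∈ J, y i) ^ k := by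
          rw [sum_comm]
          refine sum_congr rfl fun j _ => ?_
          simp only [mul_sum, ← sum_filter, filter_filter, insert_subset_iff, and_comm]
      _ = _ := by
          refine sum_congr rfl fun j _ => ?_
          rw [sum_superset_pow_eq_tupleSum c k _ (by grind [card_insert_le])]

theorem sum_powersetCard_pow_eq_tupleSum {c k : ℕ} (hk : k ≤ c) :
    ∑ J ∈ powersetCard c univ, (∑ j ∈ J, y j) ^ k
      = tupleSum y (fun i => ((Fintype.card α - i).choose (c - i) : ℝ)) k ∅ := by
  rw [← sum_superset_pow_eq_tupleSum y c k ∅ (by simpa using hk)]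
  simp

theorem sum_mul_insert (g : Finset α → ℝ) (T : Finset α) :
    ∑ j, y j * g (insert j T) = (∑ j ∈ T, y j) * g T + ∑ j ∈ Tᶜ, y j * g (insert j T) := by
  rw [← sum_add_sum_compl T, sum_mul]
  congr 1
  exact sum_congr rfl fun j hj => by rw [insert_eq_of_mem hj]

theorem sum_compl_eq_sub (T : Finset α) (f : α → ℝ) :
    ∑ j ∈ Tᶜ, f j = ∑ j, f j - ∑ j ∈ T, f j :=
  eq_sub_of_add_eq (sum_compl_add_sum T f)

theorem tupleSum_one (T : Finset α) :
    tupleSum y N 1 T = (N #T - N (#T + 1)) * ∑ j ∈ T, y j + N (#T + 1) * ∑ j, y j := by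
  have h : ∀ j ∈ Tᶜ, y j * tupleSum y N 0 (insert j T) = N (#T + 1) * y j := fun j hj => by
    rw [tupleSum, card_insert_of_notMem (mem_compl.1 hj), mul_comm]
  rw [tupleSum, sum_mul_insert, sum_congr rfl h, ← mul_sum, sum_compl_eq_sub, tupleSum]
  ring

theorem tupleSum_two (T : Finset α) :
    tupleSum y N 2 T = (N #T - 2 * N (#T + 1) + N (#T + 2)) * (∑ j ∈ T, y j) ^ 2
      + 2 * (N (#T + 1) - N (#T + 2)) * (∑ j ∈ T, y j) * ∑ j, y j
      + N (#T + 2) * (∑ j, y j) ^ 2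
      + (N (#T + 1) - N (#T + 2)) * (∑ j, y j ^ 2 - ∑ j ∈ T, y j ^ 2) := by
  have h : ∀ j ∈ Tᶜ, y j * tupleSum y N 1 (insert j T)
      = ((N (#T + 1) - N (#T + 2)) * ∑ i ∈ T, y i + N (#T + 2) * ∑ i, y i) * y j
        + (N (#T + 1) - N (#T + 2)) * y j ^ 2 := fun j hj => by
    rw [tupleSum_one, card_insert_of_notMem (mem_compl.1 hj), sum_insert (mem_compl.1 hj)]
    ring
  rw [tupleSum, sum_mul_insert, sum_congr rfl h, sum_add_distrib, ← mul_sum, ← mul_sum,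
    sum_compl_eq_sub, sum_compl_eq_sub, tupleSum_one]
  ring

theorem tupleSum_three (T : Finset α) :
    tupleSum y N 3 T = (N #T - 3 * N (#T + 1) + 3 * N (#T + 2) - N (#T + 3)) * (∑ j ∈ T, y j) ^ 3
      + 3 * (N (#T + 1) - 2 * N (#T + 2) + N (#T + 3)) * (∑ j ∈ T, y j) ^ 2 * ∑ j, y j
      + 3 * (N (#T + 2) - N (#T + 3)) * (∑ j ∈ T, y j) * (∑ j, y j) ^ 2
      + N (#T + 3) * (∑ j, y j) ^ 3
      + 3 * (N (#T + 1) - 2 * N (#T + 2) + N (#T + 3)) * (∑ j ∈ T, y j)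
          * (∑ j, y j ^ 2 - ∑ j ∈ T, y j ^ 2)
      + 3 * (N (#T + 2) - N (#T + 3)) * (∑ j, y j) * (∑ j, y j ^ 2 - ∑ j ∈ T, y j ^ 2)
      + (N (#T + 1) - 3 * N (#T + 2) + 2 * N (#T + 3)) * (∑ j, y j ^ 3 - ∑ j ∈ T, y j ^ 3) := by
  have h : ∀ j ∈ Tᶜ, y j * tupleSum y N 2 (insert j T)
      = ((N (#T + 1) - 2 * N (#T + 2) + N (#T + 3)) * (∑ i ∈ T, y i) ^ 2
          + 2 * (N (#T + 2) - N (#T + 3)) * (∑ i ∈ T, y i) * ∑ i, y i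
          + N (#T + 3) * (∑ i, y i) ^ 2
          + (N (#T + 2) - N (#T + 3)) * (∑ i, y i ^ 2 - ∑ i ∈ T, y i ^ 2)) * y j
        + (2 * (N (#T + 1) - 2 * N (#T + 2) + N (#T + 3)) * ∑ i ∈ T, y i
          + 2 * (N (#T + 2) - N (#T + 3)) * ∑ i, y i) * y j ^ 2
        + (N (#T + 1) - 3 * N (#T + 2) + 2 * N (#T + 3)) * y j ^ 3 := fun j hj => by
    rw [tupleSum_two, card_insert_of_notMem (mem_compl.1 hj), sum_insert (mem_compl.1 hj),
      sum_insert (mem_compl.1 hj)]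
    ring
  rw [tupleSum, sum_mul_insert, sum_congr rfl h, sum_add_distrib, sum_add_distrib, ← mul_sum,
    ← mul_sum, ← mul_sum, sum_compl_eq_sub, sum_compl_eq_sub, sum_compl_eq_sub, tupleSum_two]
  ring

/-- With `p k` the probability that `k` given indices lie in `J`, this is `E[(∑_{j∈J} yⱼ)⁴]`
written in the power sums `Sₖ = ∑ⱼ yⱼᵏ`. -/
noncomputable def quarticMoment (p : ℕ → ℝ) (S₁ S₂ S₃ S₄ : ℝ) : ℝ :=
  (p 1 - 7 * p 2 + 12 * p 3 - 6 * p 4) * S₄ + (3 * p 2 - 6 * p 3 + 3 * p 4) * S₂ ^ 2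
    + (4 * p 2 - 12 * p 3 + 8 * p 4) * (S₃ * S₁) + (6 * p 3 - 6 * p 4) * (S₂ * S₁ ^ 2)
    + p 4 * S₁ ^ 4

theorem tupleSum_four_empty :
    tupleSum y N 4 ∅
      = quarticMoment N (∑ j, y j) (∑ j, y j ^ 2) (∑ j, y j ^ 3) (∑ j, y j ^ 4) := by
  have h : ∀ j, y j * tupleSum y N 3 (insert j ∅)
      = (N 4 * (∑ i, y i) ^ 3 + 3 * (N 3 - N 4) * (∑ i, y i) * ∑ i, y i ^ 2
          + (N 2 - 3 * N 3 + 2 * N 4) * ∑ i, y i ^ 3) * y j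
        + (3 * (N 3 - N 4) * (∑ i, y i) ^ 2 + 3 * (N 2 - 2 * N 3 + N 4) * ∑ i, y i ^ 2) * y j ^ 2
        + 3 * (N 2 - 3 * N 3 + 2 * N 4) * (∑ i, y i) * y j ^ 3
        + (N 1 - 7 * N 2 + 12 * N 3 - 6 * N 4) * y j ^ 4 := fun j => by
    rw [tupleSum_three, insert_empty, card_singleton, sum_singleton, sum_singleton, sum_singleton]
    ring
  rw [tupleSum, sum_congr rfl fun j _ => h j, sum_add_distrib, sum_add_distrib, sum_add_distrib,
    ← mul_sum, ← mul_sum, ← mul_sum, ← mul_sum, quarticMoment]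
  ring

end TupleSum

theorem one_div_choose_mul_sum_powersetCard_pow_four {α : Type*} [Fintype α] [DecidableEq α]
    {c : ℕ} (hc : 4 ≤ c) (y : α → ℝ) :
    1 / ((Fintype.card α).choose c : ℝ) * ∑ J ∈ powersetCard c univ, (∑ j ∈ J, y j) ^ 4
      = quarticMoment (sampleProb (Fintype.card α) c)
          (∑ j, y j) (∑ j, y j ^ 2) (∑ j, y j ^ 3) (∑ j, y j ^ 4) := by
  rw [sum_powersetCard_pow_eq_tupleSum y hc, tupleSum_four_empty]
  unfold quarticMoment sampleProb
  ring

theorem pow_three_mul_sub_le (a M : ℝ) : a ^ 3 * (M - a) ≤ 27 / 256 * M ^ 4 := by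
  nlinarith [sq_nonneg ((3 * M - 4 * a) * (M + 4 * a)), sq_nonneg ((3 * M - 4 * a) * M)]

section QuarticMomentBound

/- `M` stands for `‖x‖²` and `Sₖ` for the power sums of `y`; the hypothesis `hS₁` on the mean
`S₁ = s_y` is where the choice of the shift `q` enters. -/
variable {t a M S₁ S₂ S₃ S₄ : ℝ}

theorem cross_term_le (ht0 : 0 ≤ t) (ha : |a| ≤ 4 * t ^ 2) (hS₂ : 0 ≤ S₂) (hS₂M : S₂ ≤ M)
    (hS₃ : S₃ ^ 2 ≤ S₂ ^ 3) (hS₁ : S₁ ^ 2 * t ≤ 25 / 18 * (1 - t) * (M - S₂)) :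
    a * (S₃ * S₁) ≤ 4 / 5 * t * M ^ 2 := by
  have ha2 : a ^ 2 ≤ (4 * t ^ 2) ^ 2 := sq_le_sq' (abs_le.1 ha).1 (abs_le.1 ha).2
  have hmid : t * (1 - t) ≤ 1 / 4 := by nlinarith [sq_nonneg (1 - 2 * t)]
  refine le_of_sq_le_sq ?_ (by positivity)
  calc (a * (S₃ * S₁)) ^ 2 = a ^ 2 * S₃ ^ 2 * S₁ ^ 2 := by ring
    _ ≤ (4 * t ^ 2) ^ 2 * S₂ ^ 3 * S₁ ^ 2 := by gcongr
    _ = 16 * t ^ 3 * S₂ ^ 3 * (S₁ ^ 2 * t) := by ring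
    _ ≤ 16 * t ^ 3 * S₂ ^ 3 * (25 / 18 * (1 - t) * (M - S₂)) := by gcongr
    _ = 200 / 9 * t ^ 2 * (t * (1 - t)) * (S₂ ^ 3 * (M - S₂)) := by ring
    _ ≤ 200 / 9 * t ^ 2 * (1 / 4) * (27 / 256 * M ^ 4) :=
      mul_le_mul (by gcongr) (pow_three_mul_sub_le S₂ M)
        (mul_nonneg (pow_nonneg hS₂ 3) (by linarith)) (by positivity)
    _ ≤ (4 / 5 * t * M ^ 2) ^ 2 := by nlinarith [sq_nonneg (t * M ^ 2)]

theorem mean_sq_term_le (ht1 : t ≤ 1) (ha : a ≤ 6 * t ^ 3) (hS₂ : 0 ≤ S₂)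
    (hS₁ : S₁ ^ 2 * t ≤ 25 / 18 * (1 - t) * (M - S₂)) :
    a * (S₂ * S₁ ^ 2) ≤ 25 / 12 * t ^ 2 * (1 - t) * M ^ 2 := by
  calc a * (S₂ * S₁ ^ 2) ≤ 6 * t ^ 3 * (S₂ * S₁ ^ 2) := by gcongr
    _ = 6 * t ^ 2 * S₂ * (S₁ ^ 2 * t) := by ring
    _ ≤ 6 * t ^ 2 * S₂ * (25 / 18 * (1 - t) * (M - S₂)) := by gcongr
    _ = 25 / 3 * t ^ 2 * (1 - t) * (S₂ * (M - S₂)) := by ring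
    _ ≤ 25 / 3 * t ^ 2 * (1 - t) * (M ^ 2 / 4) := by
      gcongr
      nlinarith [sq_nonneg (M - 2 * S₂)]
    _ = 25 / 12 * t ^ 2 * (1 - t) * M ^ 2 := by ring

theorem mean_pow_four_term_le (ht0 : 0 ≤ t) (ht1 : t ≤ 1) (ha : a ≤ t ^ 4) (hS₂ : 0 ≤ S₂)
    (hS₁ : S₁ ^ 2 * t ≤ 25 / 18 * (1 - t) * (M - S₂)) :
    a * S₁ ^ 4 ≤ 625 / 324 * t ^ 2 * (1 - t) ^ 2 * M ^ 2 := by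
  have hS₁M : S₁ ^ 2 * t ≤ 25 / 18 * (1 - t) * M := by nlinarith
  calc a * S₁ ^ 4 ≤ t ^ 4 * S₁ ^ 4 := by gcongr
    _ = t ^ 2 * (S₁ ^ 2 * t) ^ 2 := by ring
    _ ≤ t ^ 2 * (25 / 18 * (1 - t) * M) ^ 2 := by gcongr
    _ = 625 / 324 * t ^ 2 * (1 - t) ^ 2 * M ^ 2 := by ring

theorem quarticMoment_le {p : ℕ → ℝ} (ht0 : 0 < t) (ht : t ≤ 1 / 2) (hp₁ : p 1 = t)
    (hp₂ : 4 / 5 * t ^ 2 ≤ p 2) (hp : ∀ k, 1 ≤ k → k ≤ 3 → p (k + 1) ≤ t * p k) (hp₄ : 0 ≤ p 4)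
    (hS₂ : 0 ≤ S₂) (hS₂M : S₂ ≤ M) (hS₄ : 0 ≤ S₄) (hS₄S₂ : S₄ ≤ S₂ ^ 2) (hS₃ : S₃ ^ 2 ≤ S₂ ^ 3)
    (hS₁ : S₁ ^ 2 * t ≤ 25 / 18 * (1 - t) * (M - S₂)) :
    quarticMoment p S₁ S₂ S₃ S₄ ≤ 5 * t * M ^ 2 := by
  have h₂ := hp 1 le_rfl (by norm_num)
  have h₃ := hp 2 (by norm_num) (by norm_num)
  have h₄ := hp 3 (by norm_num) le_rfl
  rw [hp₁] at h₂
  have hp₃ : 0 ≤ p 3 := nonneg_of_mul_nonneg_right (hp₄.trans h₄) ht0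
  have hp₃t : p 3 ≤ t ^ 3 := by
    calc p 3 ≤ t * p 2 := h₃
      _ ≤ t * (t * t) := by gcongr
      _ = t ^ 3 := by ring
  have hp₄t : p 4 ≤ t ^ 4 := by
    calc p 4 ≤ t * p 3 := h₄
      _ ≤ t * t ^ 3 := by gcongr
      _ = t ^ 4 := by ring
  have hp₄p₃ : p 4 ≤ p 3 := h₄.trans (mul_le_of_le_one_left hp₃ (by linarith))
  have hM : S₂ ^ 2 ≤ M ^ 2 := pow_le_pow_left₀ hS₂ hS₂M 2
  have hγ : 0 ≤ t - 28 / 5 * t ^ 2 + 12 * t ^ 3 := by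
    linarith [mul_nonneg ht0.le (sq_nonneg (t - 7 / 30))]
  have T₁ : (p 1 - 7 * p 2 + 12 * p 3 - 6 * p 4) * S₄ ≤ (t - 28 / 5 * t ^ 2 + 12 * t ^ 3) * M ^ 2 :=
    mul_le_mul (by linarith) (hS₄S₂.trans hM) hS₄ hγ
  have T₂ : (3 * p 2 - 6 * p 3 + 3 * p 4) * S₂ ^ 2 ≤ 3 * t ^ 2 * M ^ 2 :=
    mul_le_mul (by linarith) hM (sq_nonneg _) (by positivity)
  have htp₂ : t * p 2 ≤ 1 / 2 * p 2 :=
    mul_le_mul_of_nonneg_right ht ((by positivity : (0 : ℝ) ≤ 4 / 5 * t ^ 2).trans hp₂)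
  have T₃ := cross_term_le (a := 4 * p 2 - 12 * p 3 + 8 * p 4) ht0.le
    (abs_le.2 ⟨by linarith, by linarith⟩) hS₂ hS₂M hS₃ hS₁
  have T₄ := mean_sq_term_le (a := 6 * p 3 - 6 * p 4) (by linarith) (by linarith) hS₂ hS₁
  have T₅ := mean_pow_four_term_le ht0.le (by linarith) hp₄t hS₂ hS₁
  have hpoly : (t - 28 / 5 * t ^ 2 + 12 * t ^ 3) + 3 * t ^ 2 + 4 / 5 * t
      + 25 / 12 * t ^ 2 * (1 - t) + 625 / 324 * t ^ 2 * (1 - t) ^ 2 ≤ 5 * t := by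
    have h := sub_nonneg.2 ht
    linarith [mul_nonneg ht0.le h, mul_nonneg (pow_nonneg ht0.le 2) h,
      mul_nonneg (pow_nonneg ht0.le 3) h]
  unfold quarticMoment
  linarith [mul_le_mul_of_nonneg_right hpoly (sq_nonneg M)]

end QuarticMomentBound

section PowerSums

variable {ι : Type*} [Fintype ι] (x : ι → ℝ)

theorem sq_sum_sub_mul_sum {q w : ℝ} (hw : 0 ≤ w) (hq : Fintype.card ι * q = 1 + √w) :
    (∑ i, (x i - q * ∑ j, x j)) ^ 2 = w * (∑ j, x j) ^ 2 := by
  have h : ∑ i, (x i - q * ∑ j, x j) = -(√w * ∑ j, x j) := by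
    rw [sum_sub_distrib, ← sum_mul, sum_const, card_univ, nsmul_eq_mul]
    linear_combination (-∑ j, x j) * hq
  rw [h, neg_sq, mul_pow, Real.sq_sqrt hw]

theorem sum_sq_sub_sum_sq_sub_mul_sum {q w : ℝ} (hw : 0 ≤ w) (hι : (Fintype.card ι : ℝ) ≠ 0)
    (hq : Fintype.card ι * q = 1 + √w) :
    ∑ i, x i ^ 2 - ∑ i, (x i - q * ∑ j, x j) ^ 2 = (1 - w) / Fintype.card ι * (∑ j, x j) ^ 2 := by
  simp only [sub_sq, sum_add_distrib, sum_sub_distrib, ← sum_mul, ← mul_sum, sum_const, card_univ,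
    nsmul_eq_mul]
  rw [div_mul_eq_mul_div, eq_div_iff hι]
  linear_combination (1 - Fintype.card ι * q - √w) * (∑ j, x j) ^ 2 * hq
    - (∑ j, x j) ^ 2 * Real.sq_sqrt hw

theorem sum_pow_four_le_sq_sum_sq : ∑ i, x i ^ 4 ≤ (∑ i, x i ^ 2) ^ 2 := by
  simpa only [← pow_mul] using sum_sq_le_sq_sum_of_nonneg (s := univ) fun i _ => sq_nonneg (x i)

theorem sq_sum_pow_three_le : (∑ i, x i ^ 3) ^ 2 ≤ (∑ i, x i ^ 2) ^ 3 := by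
  calc (∑ i, x i ^ 3) ^ 2 = (∑ i, x i * x i ^ 2) ^ 2 := by simp only [← pow_succ']
    _ ≤ (∑ i, x i ^ 2) * ∑ i, (x i ^ 2) ^ 2 := sum_mul_sq_le_sq_mul_sq _ _ _
    _ ≤ (∑ i, x i ^ 2) * (∑ i, x i ^ 2) ^ 2 := by
      gcongr
      simpa only [← pow_mul] using sum_pow_four_le_sq_sum_sq x
    _ = (∑ i, x i ^ 2) ^ 3 := by ring

end PowerSums

theorem correction_weight_le {c d w : ℝ} (hw : w = (d - c) / (c * (d - 1))) (hc : 5 ≤ c)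
    (hcd : c ≤ d) : w ≤ 1 / 5 := by
  rw [hw, div_le_iff₀ (by nlinarith)]
  nlinarith

/- `25/18 = 10/9 * 5/4`: `d ≥ 10` gives `(d - c)/(d - 1) ≤ 10/9 * (1 - c/d)`, and `w ≤ 1/5`. -/
theorem correction_weight_mul_le {c d w : ℝ} (hw : w = (d - c) / (c * (d - 1))) (hc : 5 ≤ c)
    (hcd : 2 * c ≤ d) : w * c ≤ 25 / 18 * (1 - c / d) * (1 - w) := by
  have hd0 : 0 < d := by linarith
  have hd1 : 0 < d - 1 := by linarith
  have hw5 := correction_weight_le hw hc (by linarith)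
  have ht : 0 ≤ 1 - c / d := by rw [sub_nonneg, div_le_one hd0]; linarith
  have hfpc : (d - c) / (d - 1) ≤ 10 / 9 * (1 - c / d) := by
    rw [one_sub_div hd0.ne', div_le_iff₀ hd1, mul_div_assoc', div_mul_eq_mul_div,
      le_div_iff₀ hd0]
    nlinarith
  calc w * c = (d - c) / (d - 1) := by rw [hw]; field_simp
    _ ≤ 25 / 18 * (1 - c / d) * (4 / 5) := by linarith
    _ ≤ 25 / 18 * (1 - c / d) * (1 - w) := by gcongr; linarith

/-- With `5 ≤ c ≤ d/2`, `q = (1/d)(1 + √((d-c)/(c(d-1))))`,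
`y i = x i - q s_x`, and `η = ∑_{j∈J} y j` for a uniformly random `c`-subset `J`,
`E[η⁴] ≤ (5c/d) ‖x‖⁴`. -/
theorem fixed_sparsity_fourth_moment_bound
    {d c : ℕ} (hc : 5 ≤ c) (hcd : 2 * c ≤ d)
    (x : Fin d → ℝ) :
    let sx : ℝ := ∑ j, x j
    let q : ℝ := (1 / d) * (1 + Real.sqrt ((d - c) / (c * (d - 1))))
    let y : Fin d → ℝ := fun i => x i - q * sx
    (1 / (d.choose c : ℝ)) *
        ∑ J ∈ Finset.powersetCard c (Finset.univ : Finset (Fin d)), (∑ j ∈ J, y j) ^ 4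
      ≤ (5 * c / d : ℝ) * (∑ j, (x j) ^ 2) ^ 2 := by
  intro sx q y
  have hcR : (5 : ℝ) ≤ c := by exact_mod_cast hc
  have hcdR : 2 * (c : ℝ) ≤ d := by exact_mod_cast hcd
  have hd : (d : ℝ) ≠ 0 := (by linarith : (0 : ℝ) < d).ne'
  obtain ⟨w, hw⟩ : ∃ w : ℝ, w = (d - c) / (c * (d - 1)) := ⟨_, rfl⟩
  have hw0 : 0 ≤ w := hw ▸ div_nonneg (by linarith) (mul_nonneg (by linarith) (by linarith))
  have hw1 : w ≤ 1 / 5 := correction_weight_le hw hcR (by linarith)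
  have hq : (Fintype.card (Fin d) : ℝ) * q = 1 + √w := by
    simp only [q, hw, Fintype.card_fin]; field_simp
  have hS₁ : (∑ j, y j) ^ 2 = w * sx ^ 2 := sq_sum_sub_mul_sum x hw0 hq
  have hS₂ : ∑ j, x j ^ 2 - ∑ j, y j ^ 2 = (1 - w) / d * sx ^ 2 := by
    simpa only [Fintype.card_fin] using
      sum_sq_sub_sum_sq_sub_mul_sum x hw0 (by rwa [Fintype.card_fin]) hq
  have hS₂M : ∑ j, y j ^ 2 ≤ ∑ j, x j ^ 2 :=
    sub_nonneg.1 (hS₂ ▸ mul_nonneg (div_nonneg (by linarith) d.cast_nonneg) (sq_nonneg sx))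
  have hE := one_div_choose_mul_sum_powersetCard_pow_four (by omega : 4 ≤ c) y
  rw [Fintype.card_fin] at hE
  rw [hE]
  calc _ ≤ 5 * (c / d) * (∑ j, x j ^ 2) ^ 2 :=
        quarticMoment_le (div_pos (by linarith) (by linarith))
          (by rw [div_le_iff₀ (by linarith)]; linarith)
          (sampleProb_one (by omega) (by omega)) (sampleProb_two_ge hc (by omega))
          (fun k _ hk => sampleProb_succ_le (by omega) (by omega)) (sampleProb_nonneg 4)
          (sum_nonneg fun j _ => sq_nonneg (y j)) hS₂M (sum_nonneg fun j _ => by positivity)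
          (sum_pow_four_le_sq_sum_sq y) (sq_sum_pow_three_le y) ?_
    _ = _ := by ring
  rw [hS₁, hS₂]
  calc w * sx ^ 2 * (c / d) = w * c * (sx ^ 2 / d) := by ring
    _ ≤ 25 / 18 * (1 - c / d) * (1 - w) * (sx ^ 2 / d) :=
      mul_le_mul_of_nonneg_right (correction_weight_mul_le hw hcR hcdR) (by positivity)
    _ = 25 / 18 * (1 - c / d) * ((1 - w) / d * sx ^ 2) := by ring
end
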